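/- If Chase(Σ,D) is infinite, then there exists a strongly connected component C of ledgraph(Σ) and an infinite chain of chase edges n₀ →_{y₁} n₁ →_{y₂} ⋯ in Chase(Σ,D) such that var(n_i) ∈ C for all i ≥ 0. -/

import Mathlib

/- Formalization of the framework of "Chase Termination Beyond Polynomial Time":
   terms, atoms, tgds, the Datalog-first standard chase, the labelled existential
   dependency graph, path queries, propagation, saturation, ranks, and term trees. -/

namespace ChasePaper

/-- Terms built from countably many constants, variables, and nulls. -/
inductive Term : Type
  | const : ℕ → Term
  | var : ℕ → Term
  | null : ℕ → Term
  deriving DecidableEq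

/-- Atoms: a predicate applied to a list of terms (the arity of the predicate
being the length of the argument list). -/
structure Atom : Type where
  pred : ℕ
  args : List Term
  deriving DecidableEq

def Atom.vars (a : Atom) : Set ℕ := { x | Term.var x ∈ a.args }

/-- Application of a substitution (acting on variables) to a term. -/
def Term.subst (σ : ℕ → Term) : Term → Term
  | Term.var x => σ x
  | t => t

def Atom.subst (σ : ℕ → Term) (a : Atom) : Atom := ⟨a.pred, a.args.map (Term.subst σ)⟩

/-- A substitution is ground if it never yields a variable. -/
def GroundSub (σ : ℕ → Term) : Prop := ∀ x y : ℕ, σ x ≠ Term.var y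

/-- A tuple-generating dependency `B[x,y] → ∃v. H[y,v]`, represented by its body
and head; universal, frontier, and existential variables are derived. -/
structure TGD : Type where
  body : Finset Atom
  head : Finset Atom
  deriving DecidableEq

def TGD.bodyVars (ρ : TGD) : Set ℕ := { x | ∃ a ∈ ρ.body, x ∈ a.vars }
def TGD.headVars (ρ : TGD) : Set ℕ := { x | ∃ a ∈ ρ.head, x ∈ a.vars }
/-- the frontier variables `y⃗` -/
def TGD.frontier (ρ : TGD) : Set ℕ := ρ.bodyVars ∩ ρ.headVars
/-- the existentially quantified variables `v⃗` -/
def TGD.exVars (ρ : TGD) : Set ℕ := ρ.headVars \ ρ.bodyVars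
def TGD.allVars (ρ : TGD) : Set ℕ := ρ.bodyVars ∪ ρ.headVars
def TGD.isDatalog (ρ : TGD) : Prop := ρ.exVars = ∅

/-- `σ` is a match of the body of `ρ` in `I`. -/
def BodyMatch (I : Set Atom) (ρ : TGD) (σ : ℕ → Term) : Prop :=
  GroundSub σ ∧ ∀ a ∈ ρ.body, a.subst σ ∈ I

/-- The match `σ` of `ρ` is satisfied in `I`. -/
def MatchSatisfied (I : Set Atom) (ρ : TGD) (σ : ℕ → Term) : Prop :=
  ∃ σ' : ℕ → Term, GroundSub σ' ∧ (∀ x ∈ ρ.bodyVars, σ' x = σ x) ∧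
    ∀ a ∈ ρ.head, a.subst σ' ∈ I

def SatTGD (I : Set Atom) (ρ : TGD) : Prop := ∀ σ, BodyMatch I ρ σ → MatchSatisfied I ρ σ

/-- A database: a finite set of variable-free, null-free atoms. -/
def IsDatabase (D : Set Atom) : Prop :=
  D.Finite ∧ ∀ a ∈ D, ∀ t ∈ a.args, ∃ c : ℕ, t = Term.const c

def termsOf (I : Set Atom) : Set Term := { t | ∃ a ∈ I, t ∈ a.args }

/-- Data of a single chase step: the applied tgd, the match, and the extended match. -/
structure Step : Type where
  rule : TGD
  m : ℕ → Term
  mx : ℕ → Term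

/-- A Datalog-first standard chase sequence for the tgd set `S` and database `D`. -/
structure ChaseSeq (S : Finset TGD) (D : Set Atom) : Type where
  seq : ℕ → Set Atom
  step : ℕ → Option Step
  init : seq 0 = D
  app : ∀ i st, step i = some st →
    st.rule ∈ S ∧
    BodyMatch (seq i) st.rule st.m ∧
    ¬ MatchSatisfied (seq i) st.rule st.m ∧
    (∀ x ∈ st.rule.bodyVars, st.mx x = st.m x) ∧
    (∀ v ∈ st.rule.exVars, ∃ n : ℕ, st.mx v = Term.null n ∧ Term.null n ∉ termsOf (seq i)) ∧
    (∀ v ∈ st.rule.exVars, ∀ w ∈ st.rule.exVars, st.mx v = st.mx w → v = w) ∧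
    seq (i + 1) = seq i ∪ { a | ∃ b ∈ st.rule.head, a = b.subst st.mx } ∧
    (st.rule.exVars ≠ ∅ → ∀ ρ ∈ S, ρ.isDatalog → SatTGD (seq i) ρ)
  halt : ∀ i, step i = none → seq (i + 1) = seq i ∧ ∀ ρ ∈ S, SatTGD (seq i) ρ
  fair : ∀ i, ∀ ρ ∈ S, ∀ σ, BodyMatch (seq i) ρ σ → ∃ j, i < j ∧ MatchSatisfied (seq j) ρ σ

def chase {S : Finset TGD} {D : Set Atom} (cs : ChaseSeq S D) : Set Atom := ⋃ i, cs.seq i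

def chaseTerms {S : Finset TGD} {D : Set Atom} (cs : ChaseSeq S D) : Set Term :=
  termsOf (chase cs)

/-- The null `n` is introduced at step `i` (with step data `st`) as the fresh value of
the existential variable `v`. -/
def IntroducedAt {S : Finset TGD} {D : Set Atom} (cs : ChaseSeq S D) (n i : ℕ) (st : Step)
    (v : ℕ) : Prop :=
  cs.step i = some st ∧ v ∈ st.rule.exVars ∧ st.mx v = Term.null n

/-- `var(n) = v`. -/
def NullVar {S : Finset TGD} {D : Set Atom} (cs : ChaseSeq S D) (n v : ℕ) : Prop :=
  ∃ i st, IntroducedAt cs n i st v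

/-- Chase edge `t →_y n`. -/
def ChaseEdge {S : Finset TGD} {D : Set Atom} (cs : ChaseSeq S D) (t : Term) (y n : ℕ) : Prop :=
  ∃ i st v, IntroducedAt cs n i st v ∧ y ∈ st.rule.frontier ∧ st.m y = t

/-- The variables of the tgds in `S` are renamed apart. -/
def RenamedApart (S : Finset TGD) : Prop :=
  ∀ ρ₁ ∈ S, ∀ ρ₂ ∈ S, ρ₁ ≠ ρ₂ → ρ₁.allVars ∩ ρ₂.allVars = ∅

/-- A predicate position `⟨p, i⟩`. -/
abbrev Pos := ℕ × ℕ

def posIn (x : ℕ) (A : Finset Atom) : Set Pos :=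
  { pq | ∃ a ∈ A, a.pred = pq.1 ∧ a.args[pq.2]? = some (Term.var x) }

/-- positions of `x` in the body of `ρ` -/
def posB (ρ : TGD) (x : ℕ) : Set Pos := posIn x ρ.body
/-- positions of `x` in the head of `ρ` -/
def posH (ρ : TGD) (x : ℕ) : Set Pos := posIn x ρ.head

/-- `Ω_v` for the existential variable `v` of the tgd `ρv`: the smallest set of positions
containing `posH ρv v` and closed under propagation through universal variables. -/
inductive Omega (S : Finset TGD) (ρv : TGD) (v : ℕ) : Pos → Prop
  | base : ∀ {pq}, pq ∈ posH ρv v → Omega S ρv v pq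
  | step : ∀ {ρ : TGD} {x : ℕ} {pq}, ρ ∈ S → x ∈ ρ.bodyVars →
      (∀ q ∈ posB ρ x, Omega S ρv v q) → pq ∈ posH ρ x → Omega S ρv v pq

/-- `v` is a vertex of `ledgraph(S)`. -/
def LVertex (S : Finset TGD) (v : ℕ) : Prop := ∃ ρ ∈ S, v ∈ ρ.exVars

/-- Edge `v →_y w` of the labelled existential dependency graph `ledgraph(S)`. -/
def LEdge (S : Finset TGD) (v y w : ℕ) : Prop :=
  ∃ ρv ∈ S, ∃ ρw ∈ S, v ∈ ρv.exVars ∧ w ∈ ρw.exVars ∧ y ∈ ρw.frontier ∧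
    ∀ pq ∈ posB ρw y, Omega S ρv v pq

def LEdgeAny (S : Finset TGD) (v w : ℕ) : Prop := ∃ y, LEdge S v y w

/-- `ledgraph(S)` is acyclic. -/
def LAcyclic (S : Finset TGD) : Prop := ∀ v, ¬ Relation.TransGen (LEdgeAny S) v v

def LReach (S : Finset TGD) : ℕ → ℕ → Prop := Relation.ReflTransGen (LEdgeAny S)

/-- The strongly connected component of `v` in `ledgraph(S)`. -/
def scc (S : Finset TGD) (v : ℕ) : Set ℕ := { u | LReach S u v ∧ LReach S v u }

/-- A path `v₀ →_{y₁} v₁ →_{y₂} ⋯ →_{y_len} v_len` in `ledgraph(S)`, together with,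
for each `1 ≤ i ≤ len`, the tgd of the vertex `v_i`. -/
structure LPath (S : Finset TGD) : Type where
  len : ℕ
  vtx : ℕ → ℕ
  lab : ℕ → ℕ
  tgd : ℕ → TGD
  edge : ∀ i, 1 ≤ i → i ≤ len → LEdge S (vtx (i - 1)) (lab i) (vtx i)
  mem : ∀ i, 1 ≤ i → i ≤ len → tgd i ∈ S ∧ vtx i ∈ (tgd i).exVars ∧ lab i ∈ (tgd i).frontier

/-- The renamed variable `ỹ_j` of the path query: `ỹ_j` is the copy of the frontier
variable `y_j` in the `j`-th copied tgd, and `ỹ_{len+1}` is a fresh variable. -/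
def ytil {S : Finset TGD} (p : LPath S) (j : ℕ) : ℕ :=
  if j ≤ p.len then Nat.pair j (p.lab j) else Nat.pair j 0

/-- Renaming of the variables of the `i`-th copied tgd (body). -/
def bodyRen (i : ℕ) : ℕ → Term := fun x => Term.var (Nat.pair i x)

/-- Renaming of the variables of the `i`-th copied tgd (head), where the existential
variable `v_i` is replaced by `ỹ_{i+1}`. -/
def headRen {S : Finset TGD} (p : LPath S) (i : ℕ) : ℕ → Term :=
  fun x => if x = p.vtx i then Term.var (ytil p (i + 1)) else Term.var (Nat.pair i x)

/-- The atoms of the conjunctive query `Path(𝔭) = ⋀ᵢ (Bᵢ ∧ Hᵢ[ṽᵢ/ỹᵢ₊₁])`. -/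
def pathAtoms {S : Finset TGD} (p : LPath S) : Set Atom :=
  { a | ∃ i, 1 ≤ i ∧ i ≤ p.len ∧
      ((∃ b ∈ (p.tgd i).body, a = b.subst (bodyRen i)) ∨
       (∃ b ∈ (p.tgd i).head, a = b.subst (headRen p i))) }

/-- The Datalog rules of `S` entail the rule `B → H` (all variables of `H` occur in `B`). -/
def DatalogEntails (S : Finset TGD) (B H : Set Atom) : Prop :=
  ∀ I : Set Atom, (∀ ρ ∈ S, ρ.isDatalog → SatTGD I ρ) →
    ∀ σ : ℕ → Term, GroundSub σ → (∀ a ∈ B, a.subst σ ∈ I) → ∀ a ∈ H, a.subst σ ∈ I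

/-- Substitution producing `H*[ỹ_{ℓ+1}, z̃⃗₁, ỹ₂, w̃⃗₁]` from the head of the first tgd
of the path. -/
def basePropSub {S : Finset TGD} (p : LPath S) : ℕ → Term :=
  fun x =>
    if x = p.lab 1 then Term.var (ytil p (p.len + 1))
    else if x = p.vtx 1 then Term.var (ytil p 2)
    else Term.var (Nat.pair 1 x)

/-- The path `𝔭` (starting with an edge `u* →_{y*} v*`) is base-propagating. -/
def BasePropagating {S : Finset TGD} (p : LPath S) : Prop :=
  DatalogEntails S (pathAtoms p) { a | ∃ b ∈ (p.tgd 1).head, a = b.subst (basePropSub p) }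

/-- Substitution producing `H*[ỹ_{l+1}, x⃗_z, ỹ₂, x⃗_w]` (fresh variables `Nat.pair 0 _`). -/
def stepPremSub {S : Finset TGD} (p : LPath S) (l ystar vstar : ℕ) : ℕ → Term :=
  fun x =>
    if x = ystar then Term.var (ytil p (l + 1))
    else if x = vstar then Term.var (ytil p 2)
    else Term.var (Nat.pair 0 x)

/-- Substitution producing `H*[ỹ_{l+k+1}, x⃗_z, ỹ_{l+2}, x⃗_w]`. -/
def stepConcSub {S : Finset TGD} (p : LPath S) (l ystar vstar : ℕ) : ℕ → Term :=
  fun x =>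
    if x = ystar then Term.var (ytil p (p.len + 1))
    else if x = vstar then Term.var (ytil p (l + 2))
    else Term.var (Nat.pair 0 x)

/-- The composite path `p = 𝔭^a 𝔭^b` (with `𝔭^a` of length `l`) is step-propagating for
the edge `u* →_{ystar} vstar` whose tgd is `ρstar`. -/
def StepPropagating {S : Finset TGD} (p : LPath S) (l : ℕ) (ρstar : TGD)
    (ystar vstar : ℕ) : Prop :=
  DatalogEntails S
    (pathAtoms p ∪ { a | ∃ b ∈ ρstar.head, a = b.subst (stepPremSub p l ystar vstar) })
    { a | ∃ b ∈ ρstar.head, a = b.subst (stepConcSub p l ystar vstar) }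

/-- A labelled edge `(u, y, v)`, i.e. `u →_y v`. -/
abbrev EdgeSet := Set (ℕ × ℕ × ℕ)

def EdgeInC (S : Finset TGD) (C : Set ℕ) (e : ℕ × ℕ × ℕ) : Prop :=
  e.1 ∈ C ∧ e.2.2 ∈ C ∧ LEdge S e.1 e.2.1 e.2.2

/-- The strongly connected component `C` is `E`-saturating. -/
def ESaturating (S : Finset TGD) (C : Set ℕ) (E : EdgeSet) : Prop :=
  (∀ e ∈ E, EdgeInC S C e) ∧
  -- (1) C without the edges of E is acyclic
  (∀ v, ¬ Relation.TransGen
      (fun a b => a ∈ C ∧ b ∈ C ∧ ∃ y, LEdge S a y b ∧ (a, y, b) ∉ E) v v) ∧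
  -- (2) E-edges with a common target carry the same label
  (∀ u x v u' x', (u, x, v) ∈ E → (u', x', v) ∈ E → x = x') ∧
  -- (3) every path e𝔭 with e ∈ E and 𝔭 an Ē-path is base-propagating
  (∀ p : LPath S, 1 ≤ p.len →
    (∀ i ≤ p.len, p.vtx i ∈ C) →
    (p.vtx 0, p.lab 1, p.vtx 1) ∈ E →
    (∀ i, 2 ≤ i → i ≤ p.len → (p.vtx (i - 1), p.lab i, p.vtx i) ∉ E) →
    (∃ e ∈ E, e.1 = p.vtx p.len) →
    BasePropagating p) ∧
  -- (4) every path e^a 𝔭₁ e^b 𝔭₂ with e^a, e^b ∈ E and 𝔭₁, 𝔭₂ Ē-paths is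
  --     step-propagating for every e ∈ E
  (∀ p : LPath S, ∀ l, 1 ≤ l → l < p.len →
    (∀ i ≤ p.len, p.vtx i ∈ C) →
    (p.vtx 0, p.lab 1, p.vtx 1) ∈ E →
    (p.vtx l, p.lab (l + 1), p.vtx (l + 1)) ∈ E →
    (∀ i, 2 ≤ i → i ≤ l → (p.vtx (i - 1), p.lab i, p.vtx i) ∉ E) →
    (∀ i, l + 2 ≤ i → i ≤ p.len → (p.vtx (i - 1), p.lab i, p.vtx i) ∉ E) →
    (∃ e ∈ E, e.1 = p.vtx p.len) →
    ∀ e ∈ E, ∀ ρstar ∈ S, e.2.2 ∈ ρstar.exVars →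
      StepPropagating p l ρstar e.2.1 e.2.2)

/-- `S` is saturating: every strongly connected component of `ledgraph(S)` is
`E`-saturating for some `E`. -/
def Saturating (S : Finset TGD) : Prop :=
  ∀ v, LVertex S v → ∃ E : EdgeSet, ESaturating S (scc S v) E

/-- `λ(v)`: the labels of edges into `v` from within its own SCC. -/
def labelSet (S : Finset TGD) (v : ℕ) : Set ℕ := { x | ∃ u ∈ scc S v, LEdge S u x v }

/-- `conf(v)`. -/
noncomputable def conf (S : Finset TGD) (v : ℕ) : ℕ := (labelSet S v).ncard

/-- `conf(C)`. -/
noncomputable def confC (S : Finset TGD) (C : Set ℕ) : ℕ := sSup (conf S '' C)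

/-- `t` is a `C`-input of the chase. -/
def CInput {S : Finset TGD} {D : Set Atom} (cs : ChaseSeq S D) (C : Set ℕ) (t : Term) : Prop :=
  t ∈ chaseTerms cs ∧
    ((∃ c, t = Term.const c) ∨
     ∃ n v, t = Term.null n ∧ NullVar cs n v ∧ v ∉ C ∧ ∃ x w, w ∈ C ∧ LEdge S v x w)

/-- `m 0 → m 1 → ⋯ → m k` is a chain of chase edges all of whose nulls belong
(via `var`) to `C`. -/
def CChain {S : Finset TGD} {D : Set Atom} (cs : ChaseSeq S D) (C : Set ℕ)
    (k : ℕ) (m : ℕ → ℕ) : Prop :=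
  (∀ i ≤ k, ∃ v ∈ C, NullVar cs (m i) v) ∧
  (∀ i, 1 ≤ i → i ≤ k → ∃ x, ChaseEdge cs (Term.null (m (i - 1))) x (m i))

/-- The null `n` has `C`-depth at most `d`. -/
def CDepthLe {S : Finset TGD} {D : Set Atom} (cs : ChaseSeq S D) (C : Set ℕ)
    (n d : ℕ) : Prop :=
  (∃ v ∈ C, NullVar cs n v) ∧ ∀ k m, CChain cs C k m → m k = n → k ≤ d

/-- Vertices of SCCs that are direct `≺`-predecessors of `scc v`. -/
def InPred (S : Finset TGD) (v : ℕ) : Set ℕ :=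
  { u | LVertex S u ∧ u ∉ scc S v ∧ ∃ y w, w ∈ scc S v ∧ LEdge S u y w }

/-- Vertices of the SCCs in `𝒞_cxt` for `scc v` (w.r.t. the chosen edge sets `EC`). -/
def CxtPred (S : Finset TGD) (EC : ℕ → EdgeSet) (v : ℕ) : Set ℕ :=
  { u | ∃ v' w x y, v' ∈ scc S v ∧ w ∈ scc S v ∧ (w, x, v') ∈ EC v ∧
      LEdge S u y v' ∧ x ≠ y }

/-- A choice of edge sets `EC` (constant on SCCs, making every SCC saturating) and a
rank function (constant on SCCs) satisfying the defining equations of Definition 5.3. -/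
def RankSystem (S : Finset TGD) (EC : ℕ → EdgeSet) (rank : ℕ → ℕ) : Prop :=
  (∀ v, LVertex S v → ESaturating S (scc S v) (EC v)) ∧
  (∀ u v : ℕ, u ∈ scc S v → EC u = EC v) ∧
  (∀ u v : ℕ, u ∈ scc S v → rank u = rank v) ∧
  (∀ v, LVertex S v →
    rank v =
      if confC S (scc S v) = 0 then sSup (insert 0 (rank '' InPred S v))
      else if confC S (scc S v) = 1 then
        max (sSup (insert 0 (rank '' InPred S v)))
          (sSup (insert 0 (rank '' CxtPred S EC v)) + 1)
      else
        max (sSup (insert 0 (rank '' InPred S v)))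
          (sSup (insert 0 (rank '' CxtPred S EC v)) + 2))

/-- `k`-fold iterated exponential. -/
def iterExp : ℕ → ℕ → ℕ
  | 0, n => n
  | k + 1, n => 2 ^ iterExp k n

/-- `f` is a `k`-exponential function: bounded by the `k`-fold iterated exponential of a
polynomial (0-exponential means polynomial). -/
def KExpBounded (k : ℕ) (f : ℕ → ℕ) : Prop :=
  ∃ c e : ℕ, ∀ n, f n ≤ iterExp k (c * (n + 1) ^ e)

/-- `S` is arboreous (w.r.t. a rank system), with `scc S vhat` the unique SCC of maximal
rank and `conf` at most 1. -/
def Arboreous (S : Finset TGD) (EC : ℕ → EdgeSet) (rank : ℕ → ℕ) (vhat : ℕ) : Prop :=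
  RankSystem S EC rank ∧ LVertex S vhat ∧
  (∀ u, LVertex S u → rank u ≤ rank vhat) ∧
  (∀ u, LVertex S u → rank u = rank vhat → u ∈ scc S vhat) ∧
  confC S (scc S vhat) ≤ 1

/-- Edge `n ↠ m` of the null forest of `C`. -/
def NfEdge {S : Finset TGD} {D : Set Atom} (cs : ChaseSeq S D) (C : Set ℕ)
    (n m : ℕ) : Prop :=
  (∃ v ∈ C, NullVar cs n v) ∧ (∃ v ∈ C, NullVar cs m v) ∧
    ∃ x, ChaseEdge cs (Term.null n) x m

/-- `ρ` is an `Ê`-tgd: it has an existential variable that is the target of an `Ê`-edge. -/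
def IsETgd (Ehat : EdgeSet) (ρ : TGD) : Prop := ∃ e ∈ Ehat, e.2.2 ∈ ρ.exVars

/-- `V_Ê`: the existential variables in `C` occurring in some `Ê`-tgd. -/
def VEhat (S : Finset TGD) (C : Set ℕ) (Ehat : EdgeSet) : Set ℕ :=
  { v | v ∈ C ∧ ∃ ρ ∈ S, IsETgd Ehat ρ ∧ v ∈ ρ.exVars }

/-- `n` is a fresh null of chase step `i`. -/
def FreshAt {S : Finset TGD} {D : Set Atom} (cs : ChaseSeq S D) (i n : ℕ) : Prop :=
  ∃ st v, IntroducedAt cs n i st v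

/-- Step `i` applies an `Ê`-tgd. -/
def EStep {S : Finset TGD} {D : Set Atom} (cs : ChaseSeq S D) (Ehat : EdgeSet)
    (i : ℕ) : Prop :=
  ∃ st, cs.step i = some st ∧ IsETgd Ehat st.rule

/-- `N̂`: the nulls of variables in `C`. -/
def Nhat {S : Finset TGD} {D : Set Atom} (cs : ChaseSeq S D) (C : Set ℕ) : Set ℕ :=
  { n | ∃ v ∈ C, NullVar cs n v }

/-- `R̄`: nulls of `N̂` not introduced at any `Ê`-step. -/
def Rbar {S : Finset TGD} {D : Set Atom} (cs : ChaseSeq S D) (C : Set ℕ)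
    (Ehat : EdgeSet) : Set ℕ :=
  { n | n ∈ Nhat cs C ∧ ∀ i, EStep cs Ehat i → ¬ FreshAt cs i n }

/-- Membership in `F[i]`: the least set containing `R[i]` and closed under null-forest
edges into `R̄`. -/
inductive FsetMem {S : Finset TGD} {D : Set Atom} (cs : ChaseSeq S D) (C : Set ℕ)
    (Ehat : EdgeSet) (i : ℕ) : ℕ → Prop
  | base : ∀ {n}, FreshAt cs i n → FsetMem cs C Ehat i n
  | step : ∀ {n m}, FsetMem cs C Ehat i n → m ∈ Rbar cs C Ehat → NfEdge cs C n m →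
      FsetMem cs C Ehat i m

/-- `F[i]` as a set of terms. -/
def Fnode {S : Finset TGD} {D : Set Atom} (cs : ChaseSeq S D) (C : Set ℕ) (Ehat : EdgeSet)
    (i : ℕ) : Set Term :=
  { t | ∃ n, t = Term.null n ∧ FsetMem cs C Ehat i n }

/-- `𝓕`: the collection of the sets `F[i]` for `Ê`-steps `i`. -/
def Fcal {S : Finset TGD} {D : Set Atom} (cs : ChaseSeq S D) (C : Set ℕ)
    (Ehat : EdgeSet) : Set (Set Term) :=
  { X | ∃ i, EStep cs Ehat i ∧ X = Fnode cs C Ehat i }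

/-- `B₀`: all terms of the chase lying in no member of `𝓕`. -/
def B0 {S : Finset TGD} {D : Set Atom} (cs : ChaseSeq S D) (C : Set ℕ)
    (Ehat : EdgeSet) : Set Term :=
  { t | t ∈ chaseTerms cs ∧ ∀ X ∈ Fcal cs C Ehat, t ∉ X }

/-- The node set `N_∼` of the term tree. -/
def Nodes {S : Finset TGD} {D : Set Atom} (cs : ChaseSeq S D) (C : Set ℕ)
    (Ehat : EdgeSet) : Set (Set Term) :=
  insert (B0 cs C Ehat) (Fcal cs C Ehat)

/-- `F₁ ⇒ F₂` between members of `𝓕`. -/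
def FEdge0 {S : Finset TGD} {D : Set Atom} (cs : ChaseSeq S D) (C : Set ℕ) (Ehat : EdgeSet)
    (X Y : Set Term) : Prop :=
  X ∈ Fcal cs C Ehat ∧ Y ∈ Fcal cs C Ehat ∧ X ≠ Y ∧
    ∃ n m, Term.null n ∈ X ∧ Term.null m ∈ Y ∧ NfEdge cs C n m

/-- The edge relation `⇒` of the term tree (extended by edges from `B₀`). -/
def TEdge {S : Finset TGD} {D : Set Atom} (cs : ChaseSeq S D) (C : Set ℕ) (Ehat : EdgeSet)
    (X Y : Set Term) : Prop :=
  FEdge0 cs C Ehat X Y ∨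
    (X = B0 cs C Ehat ∧ Y ∈ Fcal cs C Ehat ∧ ∀ Z, ¬ FEdge0 cs C Ehat Z Y)

/-- `⇒*`. -/
def TReach {S : Finset TGD} {D : Set Atom} (cs : ChaseSeq S D) (C : Set ℕ)
    (Ehat : EdgeSet) : Set Term → Set Term → Prop :=
  Relation.ReflTransGen (TEdge cs C Ehat)

/-- The relation `⊴` on variables induced by a relation `R` on positions. -/
def TriRel (S : Finset TGD) (R : Pos → Pos → Prop) : ℕ → ℕ → Prop :=
  Relation.ReflTransGen (fun x y => ∃ ρ ∈ S, ∃ a ∈ ρ.body, ∃ i j : ℕ,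
    a.args[i]? = some (Term.var x) ∧ a.args[j]? = some (Term.var y) ∧
    R (a.pred, i) (a.pred, j))

/-- `R` satisfies the constraints (1)–(4) of Definition 6.4 on `⪯`. -/
def Admissible (S : Finset TGD) (C : Set ℕ) (Ehat : EdgeSet)
    (R : Pos → Pos → Prop) : Prop :=
  ∀ ρ ∈ S, ∀ a ∈ ρ.head, ∀ i j : ℕ, ∀ vi vj : ℕ,
    a.args[i]? = some (Term.var vi) → a.args[j]? = some (Term.var vj) →
    R (a.pred, i) (a.pred, j) →
      (¬ (vi ∈ ρ.exVars ∧ vi ∈ C ∧ vj ∈ ρ.exVars ∧ vj ∉ C)) ∧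
      (¬ (vi ∈ ρ.exVars ∧ vi ∈ VEhat S C Ehat ∧ vj ∈ ρ.frontier)) ∧
      (¬ (vi ∈ ρ.exVars ∧ vi ∈ C ∧ vj ∈ ρ.frontier ∧ vj ∉ labelSet S vi)) ∧
      (vi ∈ ρ.frontier → vj ∈ ρ.frontier → TriRel S R vi vj)

/-- `R` is the relation `⪯`: the largest relation satisfying constraints (1)–(4). -/
def IsPrecRel (S : Finset TGD) (C : Set ℕ) (Ehat : EdgeSet)
    (R : Pos → Pos → Prop) : Prop :=
  Admissible S C Ehat R ∧
    ∀ R' : Pos → Pos → Prop, Admissible S C Ehat R' → ∀ p q, R' p q → R p q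

/-- `Ω̂`: the `Ĉ`-affected positions. -/
def OmegaHat (S : Finset TGD) (C : Set ℕ) : Set Pos :=
  { pq | ∃ v ∈ C, ∃ ρ ∈ S, v ∈ ρ.exVars ∧ Omega S ρ v pq }

/-- The body variable `x` of `ρ` is `Ĉ`-affected. -/
def CAffected (S : Finset TGD) (C : Set ℕ) (ρ : TGD) (x : ℕ) : Prop :=
  x ∈ ρ.bodyVars ∧ ∀ pq ∈ posB ρ x, pq ∈ OmegaHat S C

/-- `S` is path-guarded (w.r.t. `Ĉ = C` and the relation `⊴` induced by `R = ⪯`). -/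
def PathGuarded (S : Finset TGD) (C : Set ℕ) (R : Pos → Pos → Prop) : Prop :=
  ∀ ρ ∈ S, ∀ x y : ℕ, CAffected S C ρ x → CAffected S C ρ y →
    TriRel S R x y ∨ TriRel S R y x

/-- The constants occurring in `S` and `D`. -/
def constsIn (S : Finset TGD) (D : Set Atom) : Set ℕ :=
  { c | (∃ a ∈ D, Term.const c ∈ a.args) ∨
        ∃ ρ ∈ S, ∃ a : Atom, (a ∈ ρ.body ∨ a ∈ ρ.head) ∧ Term.const c ∈ a.args }



/- ===== auxiliary development ===== -/
open Classical

variable {S : Finset TGD} {D : Set Atom}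

theorem seq_mono (cs : ChaseSeq S D) : ∀ {i j : ℕ}, i ≤ j → cs.seq i ⊆ cs.seq j := by
  intro i j h
  induction j, h using Nat.le_induction with
  | base => exact fun _ h => h
  | succ j hle ih =>
    intro a ha
    have ha' := ih ha
    cases hst : cs.step j with
    | none => rw [(cs.halt j hst).1]; exact ha'
    | some st =>
      rw [(cs.app j st hst).2.2.2.2.2.2.1]; exact Or.inl ha'

theorem termsOf_mono {I J : Set Atom} (h : I ⊆ J) : termsOf I ⊆ termsOf J := by
  rintro t ⟨a, ha, hta⟩; exact ⟨a, h ha, hta⟩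

theorem mem_chase {cs : ChaseSeq S D} {a : Atom} : a ∈ chase cs ↔ ∃ i, a ∈ cs.seq i :=
  Set.mem_iUnion

/-- `n` is an introduced null. -/
def IntroN (cs : ChaseSeq S D) (n : ℕ) : Prop := ∃ i st v, IntroducedAt cs n i st v

theorem introducedAt_not_mem {cs : ChaseSeq S D} {n i st v} (h : IntroducedAt cs n i st v) :
    Term.null n ∉ termsOf (cs.seq i) := by
  obtain ⟨hst, hv, hmx⟩ := h
  obtain ⟨m, hm1, hm2⟩ := (cs.app i st hst).2.2.2.2.1 v hv
  rw [hmx] at hm1; cases hm1; exact hm2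

theorem introducedAt_mem_succ {cs : ChaseSeq S D} {n i st v} (h : IntroducedAt cs n i st v) :
    Term.null n ∈ termsOf (cs.seq (i + 1)) := by
  obtain ⟨hst, hv, hmx⟩ := h
  obtain ⟨a, ha, hva⟩ := hv.1
  refine ⟨a.subst st.mx, ?_, ?_⟩
  · rw [(cs.app i st hst).2.2.2.2.2.2.1]
    exact Or.inr ⟨a, ha, rfl⟩
  · have : Term.subst st.mx (Term.var v) ∈ (a.subst st.mx).args := by
      exact List.mem_map.2 ⟨Term.var v, hva, rfl⟩
    simpa [Term.subst, hmx] using this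

theorem introducedAt_unique {cs : ChaseSeq S D} {n i st v j st' v'}
    (h : IntroducedAt cs n i st v) (h' : IntroducedAt cs n j st' v') :
    i = j ∧ st = st' ∧ v = v' := by
  have hij : i = j := by
    by_contra hne
    rcases Nat.lt_or_ge i j with hlt | hge
    · exact introducedAt_not_mem h' (termsOf_mono (seq_mono cs hlt) (introducedAt_mem_succ h))
    · have : j < i := lt_of_le_of_ne hge (Ne.symm hne)
      exact introducedAt_not_mem h (termsOf_mono (seq_mono cs this) (introducedAt_mem_succ h'))
  subst hij
  have hst : st = st' := by
    have := h.1.symm.trans h'.1; exact Option.some.inj this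
  subst hst
  refine ⟨rfl, rfl, ?_⟩
  exact (cs.app i st h.1).2.2.2.2.2.1 v h.2.1 v' h'.2.1 (h.2.2.trans h'.2.2.symm)

/-- Edge between introduced nulls. -/
def EdgeN (cs : ChaseSeq S D) (n m : ℕ) : Prop := ∃ y, ChaseEdge cs (Term.null n) y m

theorem chaseEdge_target_introN {cs : ChaseSeq S D} {t y m} (h : ChaseEdge cs t y m) :
    IntroN cs m := by obtain ⟨i, st, v, h1, _⟩ := h; exact ⟨i, st, v, h1⟩

theorem frontier_val_mem {cs : ChaseSeq S D} {i st} (hst : cs.step i = some st)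
    {y} (hy : y ∈ st.rule.bodyVars) : st.m y ∈ termsOf (cs.seq i) := by
  obtain ⟨a, ha, hya⟩ := hy
  refine ⟨a.subst st.m, (cs.app i st hst).2.1.2 a ha, ?_⟩
  have : Term.subst st.m (Term.var y) ∈ (a.subst st.m).args := List.mem_map.2 ⟨_, hya, rfl⟩
  simpa [Term.subst] using this

theorem chaseEdge_lt {cs : ChaseSeq S D} {n y m i st v j st' w}
    (h : ChaseEdge cs (Term.null n) y m)
    (hn : IntroducedAt cs n i st v) (hm : IntroducedAt cs m j st' w) : i < j := by
  obtain ⟨j', st'', w', hm', hyf, hmy⟩ := h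
  obtain ⟨hj, hst, hw⟩ := introducedAt_unique hm hm'
  have hmem : Term.null n ∈ termsOf (cs.seq j') := by
    rw [← hmy]; exact frontier_val_mem hm'.1 hyf.1
  rw [hj]
  by_contra hle
  push_neg at hle
  exact introducedAt_not_mem hn (termsOf_mono (seq_mono cs hle) hmem)

open Classical

variable {S : Finset TGD} {D : Set Atom}

theorem termsOf_finite {I : Set Atom} (h : I.Finite) : (termsOf I).Finite := by
  have he : termsOf I = ⋃ a ∈ I, {t | t ∈ a.args} := by
    ext t; simp [termsOf, Set.mem_iUnion]
  rw [he]
  exact Set.Finite.biUnion h (fun a _ => a.args.toFinset.finite_toSet.subset (by simp))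

def baseTerms (S : Finset TGD) (D : Set Atom) : Set Term :=
  termsOf D ∪ { t | ∃ ρ ∈ S, ∃ a : Atom, (a ∈ ρ.body ∨ a ∈ ρ.head) ∧ t ∈ a.args }

theorem baseTerms_finite (hD : D.Finite) : (baseTerms S D).Finite := by
  refine (termsOf_finite hD).union ?_
  have he : { t | ∃ ρ ∈ S, ∃ a : Atom, (a ∈ ρ.body ∨ a ∈ ρ.head) ∧ t ∈ a.args }
      = ⋃ ρ ∈ (S : Set TGD), ⋃ a ∈ ((ρ.body ∪ ρ.head : Finset Atom) : Set Atom),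
          {t | t ∈ a.args} := by
    ext t
    simp only [Set.mem_iUnion, Set.mem_setOf_eq, Finset.coe_union, Set.mem_union,
      Finset.mem_coe, Finset.mem_union]
    constructor
    · rintro ⟨ρ, hρ, a, h1, h2⟩; exact ⟨ρ, hρ, a, h1, h2⟩
    · rintro ⟨ρ, hρ, a, h1, h2⟩; exact ⟨ρ, hρ, a, h1, h2⟩
  rw [he]
  exact Set.Finite.biUnion S.finite_toSet (fun ρ _ =>
    Set.Finite.biUnion (ρ.body ∪ ρ.head).finite_toSet
      (fun a _ => a.args.toFinset.finite_toSet.subset (by simp)))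

def introNullTerms (cs : ChaseSeq S D) : Set Term := {t | ∃ n, t = Term.null n ∧ IntroN cs n}

theorem terms_seq_subset (cs : ChaseSeq S D) :
    ∀ i, termsOf (cs.seq i) ⊆ baseTerms S D ∪ introNullTerms cs := by
  intro i
  induction i with
  | zero =>
    rw [cs.init]; exact fun t ht => Or.inl (Or.inl ht)
  | succ i ih =>
    cases hst : cs.step i with
    | none => rw [(cs.halt i hst).1]; exact ih
    | some st =>
      rintro t ⟨a, ha, hta⟩
      rw [(cs.app i st hst).2.2.2.2.2.2.1] at ha
      rcases ha with ha | ⟨b, hb, rfl⟩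
      · exact ih ⟨a, ha, hta⟩
      · obtain ⟨u, hu, rfl⟩ := List.mem_map.1 hta
        cases u with
        | const c => exact Or.inl (Or.inr ⟨st.rule, (cs.app i st hst).1, b, Or.inr hb, by
            simpa [Term.subst] using hu⟩)
        | null k => exact Or.inl (Or.inr ⟨st.rule, (cs.app i st hst).1, b, Or.inr hb, by
            simpa [Term.subst] using hu⟩)
        | var x =>
          have hxh : x ∈ st.rule.headVars := ⟨b, hb, hu⟩
          by_cases hxb : x ∈ st.rule.bodyVars
          · have h4 := (cs.app i st hst).2.2.2.1 x hxb
            have := frontier_val_mem hst hxb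
            have := ih this
            simpa [Term.subst, h4] using this
          · have hxe : x ∈ st.rule.exVars := ⟨hxh, hxb⟩
            obtain ⟨n, hn, _⟩ := (cs.app i st hst).2.2.2.2.1 x hxe
            refine Or.inr ⟨n, ?_, i, st, x, hst, hxe, hn⟩
            simpa [Term.subst] using hn

theorem finite_lists {T : Set Term} (hT : T.Finite) :
    ∀ k, {l : List Term | l.length = k ∧ ∀ t ∈ l, t ∈ T}.Finite := by
  intro k
  induction k with
  | zero =>
    refine Set.Finite.subset (Set.finite_singleton ([] : List Term)) ?_
    rintro l ⟨hl, -⟩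
    simpa using List.length_eq_zero_iff.1 hl
  | succ k ih =>
    refine Set.Finite.subset ((hT.prod ih).image (fun p : Term × List Term => p.1 :: p.2)) ?_
    rintro l ⟨hl, hm⟩
    cases l with
    | nil => simp at hl
    | cons a l =>
      exact ⟨⟨a, l⟩, ⟨hm a List.mem_cons_self,
        by simpa using hl, fun t ht => hm t (List.mem_cons_of_mem a ht)⟩, rfl⟩

def atomPool (S : Finset TGD) (D : Set Atom) : Set Atom := D ∪ {a | ∃ ρ ∈ S, a ∈ ρ.head}

theorem atomPool_finite (hD : D.Finite) : (atomPool S D).Finite := by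
  refine hD.union ?_
  have he : {a | ∃ ρ ∈ S, a ∈ ρ.head} = ⋃ ρ ∈ (S : Set TGD), ((ρ.head : Finset Atom) : Set Atom) := by
    ext a; simp [Set.mem_iUnion]
  rw [he]
  exact Set.Finite.biUnion S.finite_toSet (fun ρ _ => ρ.head.finite_toSet)

theorem seq_shape (cs : ChaseSeq S D) :
    ∀ i, ∀ a ∈ cs.seq i, ∃ a₀ ∈ atomPool S D, a.pred = a₀.pred ∧ a.args.length = a₀.args.length := by
  intro i
  induction i with
  | zero => rw [cs.init]; exact fun a ha => ⟨a, Or.inl ha, rfl, rfl⟩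
  | succ i ih =>
    cases hst : cs.step i with
    | none => rw [(cs.halt i hst).1]; exact ih
    | some st =>
      intro a ha
      rw [(cs.app i st hst).2.2.2.2.2.2.1] at ha
      rcases ha with ha | ⟨b, hb, rfl⟩
      · exact ih a ha
      · exact ⟨b, Or.inr ⟨st.rule, (cs.app i st hst).1, hb⟩, rfl, by simp [Atom.subst]⟩

theorem chase_finite_of_terms_finite (cs : ChaseSeq S D) (hD : D.Finite)
    (h : (chaseTerms cs).Finite) : (chase cs).Finite := by
  refine Set.Finite.subset (Set.Finite.biUnion (atomPool_finite (S := S) hD) (fun a₀ _ =>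
    Set.Finite.image (fun l => Atom.mk a₀.pred l)
      (finite_lists h a₀.args.length))) ?_
  intro a ha
  obtain ⟨i, hai⟩ := mem_chase.1 ha
  obtain ⟨a₀, ha₀, hpred, hlen⟩ := seq_shape cs i a hai
  refine Set.mem_biUnion ha₀ ⟨a.args, ⟨hlen, fun t ht => ⟨a, ha, ht⟩⟩, ?_⟩
  cases a; simp at hpred ⊢; exact hpred.symm

theorem chaseTerms_eq (cs : ChaseSeq S D) : chaseTerms cs = ⋃ i, termsOf (cs.seq i) := by
  ext t
  constructor
  · rintro ⟨a, ha, hta⟩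
    obtain ⟨i, hai⟩ := mem_chase.1 ha
    exact Set.mem_iUnion.2 ⟨i, a, hai, hta⟩
  · rintro ht
    obtain ⟨i, a, hai, hta⟩ := Set.mem_iUnion.1 ht
    exact ⟨a, mem_chase.2 ⟨i, hai⟩, hta⟩

theorem introN_infinite (cs : ChaseSeq S D) (hD : IsDatabase D)
    (hinf : ¬ (chase cs).Finite) : {n | IntroN cs n}.Infinite := by
  intro hfin
  apply hinf
  apply chase_finite_of_terms_finite cs hD.1
  have hsub : chaseTerms cs ⊆ baseTerms S D ∪ introNullTerms cs := by
    rw [chaseTerms_eq]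
    exact Set.iUnion_subset (fun i => terms_seq_subset cs i)
  refine Set.Finite.subset ?_ hsub
  refine (baseTerms_finite hD.1).union ?_
  have : introNullTerms cs ⊆ Term.null '' {n | IntroN cs n} := by
    rintro t ⟨n, rfl, hn⟩; exact ⟨n, hn, rfl⟩
  exact (hfin.image _).subset this

open Classical

variable {S : Finset TGD} {D : Set Atom}

theorem Atom.vars_finite (a : Atom) : a.vars.Finite := by
  refine Set.Finite.subset (Set.Finite.image (fun t : Term =>
    match t with | Term.var x => x | _ => 0) a.args.toFinset.finite_toSet) ?_
  intro x hx
  exact ⟨Term.var x, by simpa [Atom.vars] using hx, rfl⟩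

theorem bodyVars_finite (ρ : TGD) : ρ.bodyVars.Finite := by
  have he : ρ.bodyVars = ⋃ a ∈ (ρ.body : Finset Atom), a.vars := by
    ext x; simp [TGD.bodyVars, Set.mem_iUnion]
  rw [he]
  exact Set.Finite.biUnion ρ.body.finite_toSet (fun a _ => Atom.vars_finite a)

theorem headVars_finite (ρ : TGD) : ρ.headVars.Finite := by
  have he : ρ.headVars = ⋃ a ∈ (ρ.head : Finset Atom), a.vars := by
    ext x; simp [TGD.headVars, Set.mem_iUnion]
  rw [he]
  exact Set.Finite.biUnion ρ.head.finite_toSet (fun a _ => Atom.vars_finite a)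

theorem frontier_finite (ρ : TGD) : ρ.frontier.Finite :=
  (bodyVars_finite ρ).subset (fun _ h => h.1)

theorem exVars_finite (ρ : TGD) : ρ.exVars.Finite :=
  (headVars_finite ρ).subset (fun _ h => h.1)

/-- Two steps with the same rule and the same frontier values cannot both occur. -/
theorem step_frontier_unique (cs : ChaseSeq S D) {i j : ℕ} {st st' : Step}
    (hi : cs.step i = some st) (hj : cs.step j = some st') (hlt : i < j)
    (hr : st.rule = st'.rule)
    (hfr : ∀ y ∈ st'.rule.frontier, st.m y = st'.m y) : False := by
  classical
  have happj := cs.app j st' hj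
  have happi := cs.app i st hi
  apply happj.2.2.1
  refine ⟨fun x => if x ∈ st'.rule.bodyVars then st'.m x
    else if h : x ∈ st'.rule.exVars then st.mx x else Term.const 0, ?_, ?_, ?_⟩
  · intro x y
    by_cases hb : x ∈ st'.rule.bodyVars
    · simpa [hb] using happj.2.1.1 x y
    · by_cases he : x ∈ st'.rule.exVars
      · obtain ⟨n, hn, -⟩ := happi.2.2.2.2.1 x (hr ▸ he)
        simp [hb, he, hn]
      · simp [hb, he]
  · intro x hx; simp [hx]
  · intro a ha
    have hmem : a.subst st.mx ∈ cs.seq j := by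
      apply seq_mono cs (Nat.succ_le_of_lt hlt)
      rw [happi.2.2.2.2.2.2.1]
      exact Or.inr ⟨a, by rw [hr]; exact ha, rfl⟩
    have heq : a.subst (fun x => if x ∈ st'.rule.bodyVars then st'.m x
        else if h : x ∈ st'.rule.exVars then st.mx x else Term.const 0) = a.subst st.mx := by
      unfold Atom.subst
      congr 1
      apply List.map_congr_left
      intro u hu
      cases u with
      | const c => rfl
      | null k => rfl
      | var x =>
        have hxh : x ∈ st'.rule.headVars := ⟨a, ha, hu⟩
        by_cases hb : x ∈ st'.rule.bodyVars
        · have hxf : x ∈ st'.rule.frontier := ⟨hb, hxh⟩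
          have h4 := happi.2.2.2.1 x (hr ▸ hb)
          simp [Term.subst, hb, h4, hfr x hxf]
        · have he : x ∈ st'.rule.exVars := ⟨hxh, hb⟩
          simp [Term.subst, hb, he]
    rw [heq]; exact hmem

/-- steps whose frontier values all lie in `T` -/
def StepFrontierIn (cs : ChaseSeq S D) (T : Set Term) (i : ℕ) : Prop :=
  ∃ st, cs.step i = some st ∧ ∀ y ∈ st.rule.frontier, st.m y ∈ T

theorem steps_frontierIn_finite (cs : ChaseSeq S D) {T : Set Term} (hT : T.Finite) :
    {i | StepFrontierIn cs T i}.Finite := by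
  classical
  -- the finset of all frontier variables of rules in S
  set V : Finset ℕ := S.biUnion (fun ρ => (frontier_finite ρ).toFinset) with hV
  set F : ℕ → TGD × Finset (ℕ × Term) := fun i =>
    match cs.step i with
    | some st => (st.rule, (frontier_finite st.rule).toFinset.image (fun y => (y, st.m y)))
    | none => (⟨∅, ∅⟩, ∅) with hF
  have himg : (F '' {i | StepFrontierIn cs T i}).Finite := by
    refine Set.Finite.subset (Set.Finite.prod S.finite_toSet
      ((V ×ˢ hT.toFinset).powerset.finite_toSet)) ?_
    rintro p ⟨i, ⟨st, hst, hfr⟩, rfl⟩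
    have hFi : F i = (st.rule, (frontier_finite st.rule).toFinset.image
        (fun y => (y, st.m y))) := by rw [hF]; simp [hst]
    rw [hFi]
    constructor
    · exact (cs.app i st hst).1
    · simp only [Finset.coe_powerset, Set.mem_preimage, Set.mem_powerset_iff,
        Finset.coe_subset, Finset.subset_iff]
      intro q hq
      obtain ⟨y, hy, rfl⟩ := Finset.mem_image.1 hq
      rw [Set.Finite.mem_toFinset] at hy
      refine Finset.mem_product.2 ⟨?_, ?_⟩
      · exact Finset.mem_biUnion.2 ⟨st.rule, (cs.app i st hst).1, by
          rw [Set.Finite.mem_toFinset]; exact hy⟩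
      · rw [Set.Finite.mem_toFinset]; exact hfr y hy
  refine Set.Finite.of_finite_image himg ?_
  rintro i ⟨st, hst, hfri⟩ j ⟨st', hst', hfrj⟩ hFij
  by_contra hne
  have hFi : F i = (st.rule, (frontier_finite st.rule).toFinset.image
      (fun y => (y, st.m y))) := by rw [hF]; simp [hst]
  have hFj : F j = (st'.rule, (frontier_finite st'.rule).toFinset.image
      (fun y => (y, st'.m y))) := by rw [hF]; simp [hst']
  rw [hFi, hFj] at hFij
  have hr : st.rule = st'.rule := congrArg Prod.fst hFij
  have hg := congrArg Prod.snd hFij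
  simp only at hg
  have hfr : ∀ y ∈ st'.rule.frontier, st.m y = st'.m y := by
    intro y hy
    have hyf : y ∈ st.rule.frontier := hr ▸ hy
    have hmem : (y, st.m y) ∈ (frontier_finite st'.rule).toFinset.image
        (fun y => (y, st'.m y)) := by
      rw [← hg]
      exact Finset.mem_image.2 ⟨y, by rw [Set.Finite.mem_toFinset]; exact hyf, rfl⟩
    obtain ⟨y', _, hy'⟩ := Finset.mem_image.1 hmem
    have h1 : y' = y := congrArg Prod.fst hy'
    subst h1
    exact (congrArg Prod.snd hy').symm
  rcases Nat.lt_or_ge i j with hlt | hge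
  · exact step_frontier_unique cs hst hst' hlt hr hfr
  · have hlt : j < i := lt_of_le_of_ne hge (fun h => hne h.symm)
    exact step_frontier_unique cs hst' hst hlt hr.symm
      (fun y hy => (hfr y (hr ▸ hy)).symm)

theorem freshAt_finite (cs : ChaseSeq S D) (i : ℕ) : {n | FreshAt cs i n}.Finite := by
  classical
  cases hst : cs.step i with
  | none =>
    convert Set.finite_empty
    ext n
    simp only [Set.mem_setOf_eq, Set.mem_empty_iff_false, iff_false]
    rintro ⟨st, v, h1, -, -⟩
    rw [hst] at h1; cases h1
  | some st =>
    refine Set.Finite.subset (Set.Finite.image (fun v =>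
      match st.mx v with | Term.null n => n | _ => 0) (exVars_finite st.rule)) ?_
    rintro n ⟨st', v, h1, hv, hmx⟩
    rw [hst] at h1
    cases Option.some.inj h1
    exact ⟨v, hv, by simp [hmx]⟩

theorem nulls_frontierIn_finite (cs : ChaseSeq S D) {T : Set Term} (hT : T.Finite) :
    {n | ∃ i st v, IntroducedAt cs n i st v ∧ ∀ y ∈ st.rule.frontier, st.m y ∈ T}.Finite := by
  refine Set.Finite.subset (Set.Finite.biUnion (steps_frontierIn_finite cs hT)
    (fun i _ => freshAt_finite cs i)) ?_
  rintro n ⟨i, st, v, hintro, hfr⟩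
  exact Set.mem_biUnion ⟨st, hintro.1, hfr⟩ ⟨st, v, hintro⟩

open Classical

variable {S : Finset TGD} {D : Set Atom}

/-- there is a chain of length `k` of introduced nulls ending at `n` -/
def HasChainTo (cs : ChaseSeq S D) (n k : ℕ) : Prop :=
  ∃ f : ℕ → ℕ, f k = n ∧ (∀ i ≤ k, IntroN cs (f i)) ∧ ∀ i < k, EdgeN cs (f i) (f (i + 1))

theorem chain_le_idx (cs : ChaseSeq S D) {k : ℕ} {f : ℕ → ℕ}
    (hI : ∀ i ≤ k, IntroN cs (f i)) (hE : ∀ i < k, EdgeN cs (f i) (f (i + 1))) :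
    ∀ i ≤ k, ∀ j st v, IntroducedAt cs (f i) j st v → i ≤ j := by
  intro i
  induction i with
  | zero => exact fun _ _ _ _ _ => Nat.zero_le _
  | succ i ih =>
    intro hik j st v hintro
    obtain ⟨j', st', v', hintro'⟩ := hI i (le_of_lt (Nat.lt_of_succ_le hik))
    have hii := ih (le_of_lt (Nat.lt_of_succ_le hik)) j' st' v' hintro'
    obtain ⟨y, hedge⟩ := hE i (Nat.lt_of_succ_le hik)
    have := chaseEdge_lt hedge hintro' hintro
    omega

theorem hasChainTo_bddAbove (cs : ChaseSeq S D) {n : ℕ} (hn : IntroN cs n) :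
    BddAbove {k | HasChainTo cs n k} := by
  obtain ⟨j, st, v, hintro⟩ := hn
  refine ⟨j, fun k hk => ?_⟩
  obtain ⟨f, hfk, hI, hE⟩ := hk
  exact chain_le_idx cs hI hE k le_rfl j st v (hfk ▸ hintro)

theorem hasChainTo_zero (cs : ChaseSeq S D) {n : ℕ} (hn : IntroN cs n) :
    HasChainTo cs n 0 :=
  ⟨fun _ => n, rfl, fun i hi => by simpa using hn, fun i hi => absurd hi (Nat.not_lt_zero i)⟩

/-- depth of an introduced null: the longest chain ending at it -/
noncomputable def depthN (cs : ChaseSeq S D) (n : ℕ) : ℕ := sSup {k | HasChainTo cs n k}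

theorem hasChainTo_depth (cs : ChaseSeq S D) {n : ℕ} (hn : IntroN cs n) :
    HasChainTo cs n (depthN cs n) := by
  have h := Nat.sSup_mem (s := {k | HasChainTo cs n k}) ⟨0, hasChainTo_zero cs hn⟩
    (hasChainTo_bddAbove cs hn)
  exact h

theorem le_depth_of_chain (cs : ChaseSeq S D) {n k : ℕ} (hn : IntroN cs n)
    (h : HasChainTo cs n k) : k ≤ depthN cs n :=
  le_csSup (hasChainTo_bddAbove cs hn) h

theorem depth_lt_of_edge (cs : ChaseSeq S D) {m n : ℕ} (hm : IntroN cs m) (hn : IntroN cs n)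
    (he : EdgeN cs m n) : depthN cs m + 1 ≤ depthN cs n := by
  apply le_depth_of_chain cs hn
  obtain ⟨f, hfk, hI, hE⟩ := hasChainTo_depth cs hm
  set d := depthN cs m with hd
  refine ⟨fun i => if i ≤ d then f i else n, by simp, ?_, ?_⟩
  · intro i hi
    by_cases h : i ≤ d
    · simpa [h] using hI i h
    · simpa [h] using hn
  · intro i hi
    rcases Nat.lt_or_ge i d with h | h
    · have h1 : i ≤ d := le_of_lt h
      have h2 : i + 1 ≤ d := h
      simpa [h1, h2] using hE i h
    · have h3 : i = d := by omega
      have h4 : ¬ (i + 1 ≤ d) := by omega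
      have h5 : i ≤ d := by omega
      simp only []
      rw [if_pos h5, if_neg h4, h3, hfk]
      exact he

theorem exists_parent_of_depth (cs : ChaseSeq S D) {n d : ℕ} (hn : IntroN cs n)
    (hd : depthN cs n = d + 1) :
    ∃ m, EdgeN cs m n ∧ IntroN cs m ∧ depthN cs m = d := by
  obtain ⟨f, hfk, hI, hE⟩ := hasChainTo_depth cs hn
  rw [hd] at hfk hI hE
  refine ⟨f d, by simpa [hfk] using hE d (Nat.lt_succ_self d), hI d (Nat.le_succ d), ?_⟩
  have h1 : HasChainTo cs (f d) d := ⟨f, rfl, fun i hi => hI i (le_trans hi (Nat.le_succ d)),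
    fun i hi => hE i (lt_trans hi (Nat.lt_succ_self d))⟩
  have h2 := le_depth_of_chain cs (hI d (Nat.le_succ d)) h1
  have h3 := depth_lt_of_edge cs (hI d (Nat.le_succ d)) hn
    (by simpa [hfk] using hE d (Nat.lt_succ_self d))
  omega

theorem depth_lt_finite (cs : ChaseSeq S D) (hD : IsDatabase D) :
    ∀ k, {n | IntroN cs n ∧ depthN cs n < k}.Finite := by
  intro k
  induction k with
  | zero => simpa using Set.finite_empty
  | succ k ih =>
    have hT : (baseTerms S D ∪ Term.null '' {m | IntroN cs m ∧ depthN cs m < k}).Finite :=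
      (baseTerms_finite hD.1).union (ih.image _)
    refine Set.Finite.subset (nulls_frontierIn_finite cs hT) ?_
    rintro n ⟨⟨i, st, v, hintro⟩, hdep⟩
    refine ⟨i, st, v, hintro, ?_⟩
    intro y hy
    have hval : st.m y ∈ termsOf (cs.seq i) := frontier_val_mem hintro.1 hy.1
    have := terms_seq_subset cs i hval
    rcases this with hb | ⟨m, hm, hIm⟩
    · exact Or.inl hb
    · refine Or.inr ⟨m, ⟨hIm, ?_⟩, hm.symm⟩
      have hedge : EdgeN cs m n := ⟨y, i, st, v, hintro, hy, hm⟩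
      have := depth_lt_of_edge cs hIm ⟨i, st, v, hintro⟩ hedge
      omega

theorem exists_depth_ge (cs : ChaseSeq S D) (hD : IsDatabase D)
    (hinf : ¬ (chase cs).Finite) : ∀ k, ∃ n, IntroN cs n ∧ k ≤ depthN cs n := by
  intro k
  by_contra h
  push_neg at h
  apply introN_infinite cs hD hinf
  refine Set.Finite.subset (depth_lt_finite cs hD k) ?_
  intro n hn
  exact ⟨hn, h n hn⟩

theorem exists_depth_eq (cs : ChaseSeq S D) (hD : IsDatabase D)
    (hinf : ¬ (chase cs).Finite) : ∀ k, ∃ n, IntroN cs n ∧ depthN cs n = k := by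
  have key : ∀ d n, IntroN cs n → depthN cs n = d → ∀ k ≤ d, ∃ m, IntroN cs m ∧ depthN cs m = k := by
    intro d
    induction d with
    | zero => intro n hn hd k hk; exact ⟨n, hn, by omega⟩
    | succ d ih =>
      intro n hn hd k hk
      rcases Nat.eq_or_lt_of_le hk with h | h
      · exact ⟨n, hn, hd.trans h.symm⟩
      · obtain ⟨m, _, hIm, hdm⟩ := exists_parent_of_depth cs hn hd
        exact ih m hIm hdm k (by omega)
  intro k
  obtain ⟨n, hn, hdn⟩ := exists_depth_ge cs hD hinf k
  exact key (depthN cs n) n hn rfl k hdn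

/-- exact chain down from a null -/
theorem chain_exact (cs : ChaseSeq S D) : ∀ d n, IntroN cs n → depthN cs n = d →
    ∃ f : ℕ → ℕ, f d = n ∧ (∀ i ≤ d, IntroN cs (f i) ∧ depthN cs (f i) = i) ∧
      ∀ i < d, EdgeN cs (f i) (f (i + 1)) := by
  intro d
  induction d with
  | zero =>
    intro n hn hd
    exact ⟨fun _ => n, rfl, fun i hi => by
      simp only [Nat.le_zero] at hi; subst hi; exact ⟨hn, hd⟩,
      fun i hi => absurd hi (Nat.not_lt_zero i)⟩
  | succ d ih =>
    intro n hn hd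
    obtain ⟨m, hedge, hIm, hdm⟩ := exists_parent_of_depth cs hn hd
    obtain ⟨f, hfd, hI, hE⟩ := ih m hIm hdm
    refine ⟨fun i => if i ≤ d then f i else n, ?_, ?_, ?_⟩
    · simp
    · intro i hi
      by_cases h : i ≤ d
      · simpa [h] using hI i h
      · have : i = d + 1 := by omega
        subst this
        simpa [h] using ⟨hn, hd⟩
    · intro i hi
      rcases Nat.lt_or_ge i d with h | h
      · have h1 : i ≤ d := le_of_lt h
        have h2 : i + 1 ≤ d := h
        simpa [h1, h2] using hE i h
      · have h3 : i = d := by omega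
        subst h3
        have h4 : ¬ (i + 1 ≤ i) := by omega
        simpa [h4, hfd] using hedge

/-- there is a chain of length `k` starting at `n` climbing depths exactly -/
def GoodFrom (cs : ChaseSeq S D) (n k : ℕ) : Prop :=
  ∃ f : ℕ → ℕ, f 0 = n ∧ (∀ i ≤ k, IntroN cs (f i) ∧ depthN cs (f i) = depthN cs n + i) ∧
    ∀ i < k, EdgeN cs (f i) (f (i + 1))

theorem goodFrom_mono (cs : ChaseSeq S D) {n k k' : ℕ} (h : k ≤ k') (hg : GoodFrom cs n k') :
    GoodFrom cs n k := by
  obtain ⟨f, h0, hI, hE⟩ := hg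
  exact ⟨f, h0, fun i hi => hI i (le_trans hi h), fun i hi => hE i (lt_of_lt_of_le hi h)⟩

theorem finite_pigeonhole {F : Set ℕ} (hF : F.Finite) {P : ℕ → ℕ → Prop}
    (hmono : ∀ n k k', k ≤ k' → P n k' → P n k)
    (hex : ∀ k, ∃ n ∈ F, P n k) : ∃ n ∈ F, ∀ k, P n k := by
  classical
  by_contra h
  push_neg at h
  have hch : ∀ n : ℕ, ∃ k, n ∈ F → ¬ P n k := by
    intro n
    by_cases hn : n ∈ F
    · obtain ⟨k, hk⟩ := h n hn; exact ⟨k, fun _ => hk⟩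
    · exact ⟨0, fun hc => absurd hc hn⟩
  choose g hg using hch
  set K := hF.toFinset.sup g with hK
  obtain ⟨n, hnF, hP⟩ := hex K
  apply hg n hnF
  exact hmono n (g n) K (Finset.le_sup (hF.mem_toFinset.2 hnF)) hP

theorem exists_good_start (cs : ChaseSeq S D) (hD : IsDatabase D)
    (hinf : ¬ (chase cs).Finite) : ∃ n, IntroN cs n ∧ ∀ k, GoodFrom cs n k := by
  have hF : {n | IntroN cs n ∧ depthN cs n < 1}.Finite := depth_lt_finite cs hD 1
  have hex : ∀ k, ∃ n ∈ {n | IntroN cs n ∧ depthN cs n < 1}, GoodFrom cs n k := by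
    intro k
    obtain ⟨m, hIm, hdm⟩ := exists_depth_eq cs hD hinf k
    obtain ⟨f, hfd, hI, hE⟩ := chain_exact cs k m hIm hdm
    have h0 := hI 0 (Nat.zero_le k)
    refine ⟨f 0, ⟨h0.1, by omega⟩, f, rfl, ?_, hE⟩
    intro i hi
    refine ⟨(hI i hi).1, ?_⟩
    rw [(hI i hi).2, h0.2]
    omega
  obtain ⟨n, hn, hgood⟩ := finite_pigeonhole (P := fun n k => GoodFrom cs n k) hF (fun n k k' h => goodFrom_mono cs h) hex
  exact ⟨n, hn.1, hgood⟩

theorem exists_good_step (cs : ChaseSeq S D) (hD : IsDatabase D) {n : ℕ}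
    (hn : IntroN cs n) (hg : ∀ k, GoodFrom cs n k) :
    ∃ m, EdgeN cs n m ∧ IntroN cs m ∧ ∀ k, GoodFrom cs m k := by
  have hF : {m | IntroN cs m ∧ depthN cs m < depthN cs n + 2}.Finite :=
    depth_lt_finite cs hD _
  have hex : ∀ k, ∃ m ∈ {m | IntroN cs m ∧ depthN cs m < depthN cs n + 2},
      EdgeN cs n m ∧ GoodFrom cs m k := by
    intro k
    obtain ⟨f, h0, hI, hE⟩ := hg (k + 1)
    have h1 := hI 1 (by omega)
    refine ⟨f 1, ⟨h1.1, by omega⟩, by rw [← h0]; exact hE 0 (by omega), ?_⟩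
    refine ⟨fun i => f (i + 1), rfl, ?_, fun i hi => hE (i + 1) (by omega)⟩
    intro i hi
    refine ⟨(hI (i + 1) (by omega)).1, ?_⟩
    rw [(hI (i + 1) (by omega)).2, h1.2]
    omega
  obtain ⟨m, hm, hgood⟩ := finite_pigeonhole (P := fun m k => EdgeN cs n m ∧ GoodFrom cs m k) hF
    (fun m k k' h hp => ⟨hp.1, goodFrom_mono cs h hp.2⟩) hex
  exact ⟨m, (hgood 0).1, hm.1, fun k => (hgood k).2⟩

theorem exists_infinite_chain (cs : ChaseSeq S D) (hD : IsDatabase D)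
    (hinf : ¬ (chase cs).Finite) :
    ∃ g : ℕ → ℕ, (∀ i, IntroN cs (g i)) ∧ ∀ i, EdgeN cs (g i) (g (i + 1)) := by
  classical
  set Q : ℕ → Prop := fun n => IntroN cs n ∧ ∀ k, GoodFrom cs n k with hQ
  have hstep : ∀ n, Q n → ∃ m, EdgeN cs n m ∧ Q m := by
    intro n hn
    obtain ⟨m, he, hI, hg⟩ := exists_good_step cs hD hn.1 hn.2
    exact ⟨m, he, hI, hg⟩
  obtain ⟨n0, hn0, hg0⟩ := exists_good_start cs hD hinf
  let g : ℕ → {n // Q n} := fun k =>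
    Nat.rec ⟨n0, hn0, hg0⟩ (fun _ p => ⟨(hstep p.1 p.2).choose, (hstep p.1 p.2).choose_spec.2⟩) k
  refine ⟨fun i => (g i).1, fun i => (g i).2.1, fun i => ?_⟩
  exact (hstep (g i).1 (g i).2).choose_spec.1

open Classical

variable {S : Finset TGD} {D : Set Atom}

/-- the nulls occurring literally in the rules of `S` -/
def litNulls (S : Finset TGD) : Set ℕ :=
  {m | ∃ ρ ∈ S, ∃ a : Atom, (a ∈ ρ.body ∨ a ∈ ρ.head) ∧ Term.null m ∈ a.args}

theorem litNulls_finite : (litNulls S).Finite := by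
  have himg : (Term.null '' litNulls S).Finite := by
    refine Set.Finite.subset (baseTerms_finite (S := S) (D := (∅ : Set Atom)) Set.finite_empty) ?_
    rintro t ⟨m, ⟨ρ, hρ, a, ha, hm⟩, rfl⟩
    exact Or.inr ⟨ρ, hρ, a, ha, hm⟩
  refine Set.Finite.of_finite_image himg ?_
  intro a _ b _ h
  exact Term.null.inj h

/-- Ω-soundness: a non-literal introduced null occurs only at positions of `Ω_{var n}`. -/
theorem occ_omega (cs : ChaseSeq S D) (hDb : IsDatabase D) {n i₀ : ℕ} {st₀ : Step} {v₀ : ℕ}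
    (h0 : IntroducedAt cs n i₀ st₀ v₀) (hnl : n ∉ litNulls S) :
    ∀ j, ∀ a ∈ cs.seq j, ∀ q, a.args[q]? = some (Term.null n) →
      Omega S st₀.rule v₀ (a.pred, q) := by
  intro j
  induction j with
  | zero =>
    rw [cs.init]
    intro a ha q hq
    obtain ⟨c, hc⟩ := hDb.2 a ha _ (List.mem_of_getElem? hq)
    exact absurd hc (by simp)
  | succ j ih =>
    cases hst : cs.step j with
    | none =>
      rw [(cs.halt j hst).1]; exact ih
    | some st =>
      intro a ha q hq
      rw [(cs.app j st hst).2.2.2.2.2.2.1] at ha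
      rcases ha with ha | ⟨b, hb, rfl⟩
      · exact ih a ha q hq
      · have hq' : (b.args.map (Term.subst st.mx))[q]? = some (Term.null n) := hq
        rw [List.getElem?_map] at hq'
        cases hbq : b.args[q]? with
        | none => rw [hbq] at hq'; exact absurd hq' (by simp)
        | some u =>
          rw [hbq] at hq'
          have hu : Term.subst st.mx u = Term.null n := by simpa using hq'
          have hpred : (b.subst st.mx).pred = b.pred := rfl
          cases u with
          | const c => exact absurd hu (by simp [Term.subst])
          | null k =>
            have hk : k = n := by simpa [Term.subst] using hu
            subst hk
            exact absurd ⟨st.rule, (cs.app j st hst).1, b, Or.inr hb,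
              List.mem_of_getElem? hbq⟩ hnl
          | var x =>
            have hmx : st.mx x = Term.null n := by simpa [Term.subst] using hu
            have hxh : x ∈ st.rule.headVars := ⟨b, hb, List.mem_of_getElem? hbq⟩
            by_cases hxb : x ∈ st.rule.bodyVars
            · have h4 : st.m x = Term.null n := by
                rw [← (cs.app j st hst).2.2.2.1 x hxb]; exact hmx
              rw [hpred]
              refine Omega.step (cs.app j st hst).1 hxb ?_ ⟨b, hb, rfl, hbq⟩
              intro pq hpq
              obtain ⟨a', ha', hp1, hp2⟩ := hpq
              have hmem : a'.subst st.m ∈ cs.seq j := (cs.app j st hst).2.1.2 a' ha'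
              have hget : (a'.subst st.m).args[pq.2]? = some (Term.null n) := by
                show (a'.args.map (Term.subst st.m))[pq.2]? = _
                rw [List.getElem?_map, hp2]
                simp [Term.subst, h4]
              have := ih (a'.subst st.m) hmem pq.2 hget
              have hpr : (a'.subst st.m).pred = pq.1 := hp1
              rw [hpr] at this
              exact this
            · have hxe : x ∈ st.rule.exVars := ⟨hxh, hxb⟩
              have hintro : IntroducedAt cs n j st x := ⟨hst, hxe, hmx⟩
              obtain ⟨hj, hst', hv⟩ := introducedAt_unique h0 hintro
              apply Omega.base
              rw [hpred, hst']
              exact ⟨b, hb, rfl, by rw [hv]; exact hbq⟩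

theorem ledge_of_chaseEdge (cs : ChaseSeq S D) (hDb : IsDatabase D)
    {n m y : ℕ} {i : ℕ} {st : Step} {v : ℕ} {j : ℕ} {st' : Step} {w : ℕ}
    (hn : IntroducedAt cs n i st v) (hm : IntroducedAt cs m j st' w)
    (hnl : n ∉ litNulls S) (he : ChaseEdge cs (Term.null n) y m) :
    LEdge S v y w := by
  obtain ⟨j', st'', w', hm', hyf, hmy⟩ := he
  obtain ⟨e1, e2, e3⟩ := introducedAt_unique hm' hm
  subst e1; subst e2; subst e3
  refine ⟨st.rule, (cs.app _ st hn.1).1, st''.rule, (cs.app _ st'' hm'.1).1,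
    hn.2.1, hm'.2.1, hyf, ?_⟩
  intro pq hpq
  obtain ⟨a', ha', hp1, hp2⟩ := hpq
  have hmem : a'.subst st''.m ∈ cs.seq j' := (cs.app _ st'' hm'.1).2.1.2 a' ha'
  have hget : (a'.subst st''.m).args[pq.2]? = some (Term.null n) := by
    show (a'.args.map (Term.subst st''.m))[pq.2]? = _
    rw [List.getElem?_map, hp2]
    simp [Term.subst, hmy]
  have hocc := occ_omega cs hDb hn hnl j' (a'.subst st''.m) hmem pq.2 hget
  have hpr : (a'.subst st''.m).pred = pq.1 := hp1
  rw [hpr] at hocc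
  exact hocc

open Classical

variable {S : Finset TGD} {D : Set Atom}

def varPool (S : Finset TGD) : Set ℕ := {v | LVertex S v}

theorem varPool_finite : (varPool S).Finite := by
  have he : varPool S = ⋃ ρ ∈ (S : Set TGD), ρ.exVars := by
    ext v; simp [varPool, LVertex, Set.mem_iUnion]
  rw [he]
  exact Set.Finite.biUnion S.finite_toSet (fun ρ _ => exVars_finite ρ)

theorem statement3' (S : Finset TGD)
    (D : Set Atom) (hD : IsDatabase D) (cs : ChaseSeq S D)
    (hinf : ¬ (chase cs).Finite) :
    ∃ v₀ : ℕ, LVertex S v₀ ∧ ∃ n : ℕ → ℕ, ∃ y : ℕ → ℕ,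
      (∀ i : ℕ, ChaseEdge cs (Term.null (n i)) (y (i + 1)) (n (i + 1))) ∧
      ∀ i : ℕ, ∃ w, NullVar cs (n i) w ∧ w ∈ scc S v₀ := by
  classical
  obtain ⟨g, hIg, hEg⟩ := exists_infinite_chain cs hD hinf
  choose I St Vv hintro using hIg
  choose Y hY using hEg
  -- I is strictly monotone, hence g is injective
  have hIlt : ∀ i, I i < I (i + 1) := fun i =>
    chaseEdge_lt (hY i) (hintro i) (hintro (i + 1))
  have hImono : StrictMono I := strictMono_nat_of_lt_succ hIlt
  have hginj : Function.Injective g := by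
    intro i j hij
    by_contra hne
    have := introducedAt_unique (hintro i) (hij ▸ hintro j)
    exact hne (hImono.injective this.1)
  -- only finitely many g i are literal nulls
  have hfinlit : {i | g i ∈ litNulls S}.Finite := by
    refine Set.Finite.preimage (Set.injOn_of_injective hginj) litNulls_finite
  obtain ⟨B, hB⟩ := hfinlit.bddAbove
  set i₁ := B + 1 with hi₁
  have hnl : ∀ i, i₁ ≤ i → g i ∉ litNulls S := by
    intro i hi hmem
    have := hB hmem
    omega
  -- ledges along the chain from i₁ on
  have hledge : ∀ i, i₁ ≤ i → LEdge S (Vv i) (Y i) (Vv (i + 1)) := fun i hi =>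
    ledge_of_chaseEdge cs hD (hintro i) (hintro (i + 1)) (hnl i hi) (hY i)
  have hreach : ∀ a b, i₁ ≤ a → a ≤ b → LReach S (Vv a) (Vv b) := by
    intro a b ha hab
    induction b, hab using Nat.le_induction with
    | base => exact Relation.ReflTransGen.refl
    | succ b hb ih =>
      exact Relation.ReflTransGen.tail ih ⟨Y b, hledge b (le_trans ha hb)⟩
  -- pigeonhole on the variables
  have hvp : ∀ i, Vv i ∈ varPool S :=
    fun i => ⟨(St i).rule, (cs.app _ _ (hintro i).1).1, (hintro i).2.1⟩
  have : Finite ↥(varPool S) := varPool_finite.to_subtype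
  set f : ℕ → ↥(varPool S) := fun i => ⟨Vv (i₁ + i), hvp _⟩ with hf
  obtain ⟨v₀s, hv₀s⟩ := Finite.exists_infinite_fiber f
  have hAinf : (f ⁻¹' {v₀s}).Infinite := Set.infinite_coe_iff.1 hv₀s
  obtain ⟨i₂, hi₂⟩ := hAinf.nonempty
  have hVV : ∀ k, k ∈ f ⁻¹' {v₀s} → Vv (i₁ + k) = v₀s.1 := by
    intro k hk
    have : f k = v₀s := hk
    exact congrArg Subtype.val this
  refine ⟨v₀s.1, v₀s.2, fun i => g (i₁ + i₂ + i), fun j => Y (i₁ + i₂ + j - 1), ?_, ?_⟩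
  · intro i
    have h1 : i₁ + i₂ + (i + 1) - 1 = i₁ + i₂ + i := by omega
    have h2 : i₁ + i₂ + (i + 1) = (i₁ + i₂ + i) + 1 := by omega
    show ChaseEdge cs (Term.null (g (i₁ + i₂ + i))) (Y (i₁ + i₂ + (i + 1) - 1))
      (g (i₁ + i₂ + (i + 1)))
    rw [h1, h2]
    exact hY (i₁ + i₂ + i)
  · intro i
    refine ⟨Vv (i₁ + i₂ + i), ⟨I _, St _, hintro _⟩, ?_, ?_⟩
    · -- LReach S (Vv (i₁ + i₂ + i)) v₀s.1
      obtain ⟨k, hk, hik⟩ := hAinf.exists_gt (i₂ + i)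
      have he : Vv (i₁ + k) = v₀s.1 := hVV k hk
      rw [← he]
      exact hreach (i₁ + i₂ + i) (i₁ + k) (by omega) (by omega)
    · -- LReach S v₀s.1 (Vv (i₁ + i₂ + i))
      have he : Vv (i₁ + i₂) = v₀s.1 := hVV i₂ hi₂
      rw [← he]
      have h3 : i₁ + i₂ + i = (i₁ + i₂) + i := by omega
      rw [h3]
      exact hreach (i₁ + i₂) (i₁ + i₂ + i) (by omega) (by omega)


/-- if `Chase(Σ,D)` is infinite, then there is a strongly connected
component `C` of `ledgraph(Σ)` and an infinite chain of chase edges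
`n₀ →_{y₁} n₁ →_{y₂} ⋯` in `Chase(Σ,D)` such that `var(nᵢ) ∈ C` for all `i`. -/
theorem statement3 (S : Finset TGD) (hra : RenamedApart S)
    (D : Set Atom) (hD : IsDatabase D) (cs : ChaseSeq S D)
    (hinf : ¬ (chase cs).Finite) :
    ∃ v₀ : ℕ, LVertex S v₀ ∧ ∃ n : ℕ → ℕ, ∃ y : ℕ → ℕ,
      (∀ i : ℕ, ChaseEdge cs (Term.null (n i)) (y (i + 1)) (n (i + 1))) ∧
      ∀ i : ℕ, ∃ w, NullVar cs (n i) w ∧ w ∈ scc S v₀ := by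
  exact statement3' S D hD cs hinf

end ChasePaper
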